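/- Let ρ and σ be density matrices on ℂ^{d_1} ⊗ … ⊗ ℂ^{d_n} and c ∈ (0,1] such that σ − cρ is positive semidefinite. Then E_R(σ) ≥ c E_R(ρ) − h₂(c), where h₂(c) = −c ln c − (1−c) ln(1−c) (with h₂(1) = 0). -/

import Mathlib

open scoped ENNReal ComplexOrder
open Matrix

noncomputable section

/-- A density matrix: positive semidefinite with unit trace. -/
def Matrix.IsDensity {I : Type*} [Fintype I] (ρ : Matrix I I ℂ) : Prop :=
  ρ.PosSemidef ∧ ρ.trace = 1

/-- An orthogonal projection matrix: Hermitian and idempotent. -/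
def Matrix.IsOrthoProj {I : Type*} [Fintype I] (P : Matrix I I ℂ) : Prop :=
  P.IsHermitian ∧ P * P = P

/-- The Kronecker product `P 1 ⊗ … ⊗ P n` of matrices on the factors. -/
def piKron {n : ℕ} {d : Fin n → ℕ} (P : ∀ s, Matrix (Fin (d s)) (Fin (d s)) ℂ) :
    Matrix (∀ s, Fin (d s)) (∀ s, Fin (d s)) ℂ :=
  Matrix.of fun i j => ∏ s, P s (i s) (j s)

/-- The `s`-th marginal of a multipartite matrix (partial trace over all other factors). -/
def pmarginal {n : ℕ} {d : Fin n → ℕ}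
    (ρ : Matrix (∀ s, Fin (d s)) (∀ s, Fin (d s)) ℂ) (s : Fin n) :
    Matrix (Fin (d s)) (Fin (d s)) ℂ :=
  Matrix.of fun i i' => ∑ j : ∀ t, Fin (d t), if j s = i then ρ j (Function.update j s i') else 0

/-- Matrix logarithm of a Hermitian matrix via the spectral decomposition
(with the convention `ln 0 = 0` on the kernel); junk value `0` otherwise. -/
def matLog {I : Type*} [Fintype I] [DecidableEq I] (ρ : Matrix I I ℂ) : Matrix I I ℂ :=
  if h : ρ.IsHermitian then
    (h.eigenvectorUnitary : Matrix I I ℂ) *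
      Matrix.diagonal (fun k => (Real.log (h.eigenvalues k) : ℂ)) *
      (star (h.eigenvectorUnitary : Matrix I I ℂ))
  else 0

open Classical in
/-- Quantum relative entropy `D(ρ‖σ) ∈ [0,∞]`:
`Tr[ρ(ln ρ − ln σ)]` if `range ρ ⊆ range σ`, and `+∞` otherwise. -/
def qRelEnt {I : Type*} [Fintype I] [DecidableEq I] (ρ σ : Matrix I I ℂ) : ℝ≥0∞ :=
  if Set.range ρ.mulVec ⊆ Set.range σ.mulVec then
    ENNReal.ofReal ((ρ * (matLog ρ - matLog σ)).trace.re)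
  else ∞

/-- Separable states: convex hull of product density matrices. -/
def IsSepState {n : ℕ} {d : Fin n → ℕ}
    (σ : Matrix (∀ s, Fin (d s)) (∀ s, Fin (d s)) ℂ) : Prop :=
  σ ∈ convexHull ℝ
    {τ | ∃ P : ∀ s, Matrix (Fin (d s)) (Fin (d s)) ℂ, (∀ s, (P s).IsDensity) ∧ τ = piKron P}

/-- The relative entropy of entanglement `E_R(ρ) = inf { D(ρ‖σ) : σ separable }`. -/
def relEntEnt {n : ℕ} {d : Fin n → ℕ}
    (ρ : Matrix (∀ s, Fin (d s)) (∀ s, Fin (d s)) ℂ) : ℝ≥0∞ :=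
  ⨅ (σ : Matrix (∀ s, Fin (d s)) (∀ s, Fin (d s)) ℂ) (_ : IsSepState σ), qRelEnt ρ σ

/-- Von Neumann entropy `H(ρ) = −∑ λ_k ln λ_k` (junk value `0` for non-Hermitian input). -/
def vnEntropy {I : Type*} [Fintype I] [DecidableEq I] (ρ : Matrix I I ℂ) : ℝ :=
  if h : ρ.IsHermitian then -∑ k, h.eigenvalues k * Real.log (h.eigenvalues k) else 0

/-- Trace norm `‖A‖₁ = Tr √(AᴴA)`. -/
def traceNorm {I : Type*} [Fintype I] [DecidableEq I] (A : Matrix I I ℂ) : ℝ :=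
  (((Matrix.posSemidef_conjTranspose_mul_self A).1.eigenvectorUnitary : Matrix I I ℂ) *
      Matrix.diagonal (fun k =>
        ((Real.sqrt ((Matrix.posSemidef_conjTranspose_mul_self A).1.eigenvalues k) : ℝ) : ℂ)) *
      (star ((Matrix.posSemidef_conjTranspose_mul_self A).1.eigenvectorUnitary :
        Matrix I I ℂ))).trace.re

end

/-!
Write `σ = c ρ + (1 - c) ρ'` with `ρ'` a state. For a separable `τ` whose support contains that
of `σ`, linearity of `Tr σ (ln σ - ln τ)` in `σ`, the bounds `Tr ρ ln σ ≥ Tr ρ ln (c ρ)` and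
`Tr ρ' ln σ ≥ Tr ρ' ln ((1 - c) ρ')` (because `c ρ ≤ σ` and `(1 - c) ρ' ≤ σ`) give
`D(σ‖τ) ≥ c D(ρ‖τ) + (1 - c) D(ρ'‖τ) - h₂(c)`, and `D(ρ'‖τ) ≥ 0` by Klein's inequality.
Taking the infimum over `τ` proves the claim.

Both trace inequalities are proved in the two eigenbases: if `u`, `v` are eigenbases of `A`, `B`
and `w j k = |⟨u j, v k⟩|²`, then `Tr f(A) g(B) = ∑ f(λ j) g(μ k) w j k`, and `ln x ≤ x - 1` is
applied termwise. For the second bound this leaves the error term `c Tr (ρ σ⁺ ρ) ≤ Tr ρ`,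
a Schur-complement inequality.
-/

namespace Matrix

section Kernel

variable {I : Type*} [Fintype I]

lemma mul_eq_zero_of_ker_le {X Y P : Matrix I I ℂ} (hker : ∀ v, Y *ᵥ v = 0 → X *ᵥ v = 0)
    (hYP : Y * P = 0) : X * P = 0 := by
  ext i k
  exact congrFun (hker (fun j => P j k) (funext fun i => congrFun (congrFun hYP i) k)) i

lemma PosSemidef.mulVec_eq_zero_of_sub_smul {X Y : Matrix I I ℂ} (hX : X.PosSemidef) {c : ℝ}
    (hc : 0 < c) (hle : (Y - c • X).PosSemidef) {v : I → ℂ} (hv : Y *ᵥ v = 0) : X *ᵥ v = 0 := by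
  have h : 0 ≤ -(c • (star v ⬝ᵥ (X *ᵥ v))) := by
    simpa [sub_mulVec, hv, smul_mulVec] using hle.dotProduct_mulVec_nonneg v
  have : star v ⬝ᵥ (X *ᵥ v) ≤ 0 := (smul_nonpos_iff_nonpos_of_pos_left hc).mp (neg_nonneg.mp h)
  exact (hX.dotProduct_mulVec_zero_iff v).mp (le_antisymm this (hX.dotProduct_mulVec_nonneg v))

variable [DecidableEq I]

lemma range_toEuclideanLin_eq_orthogonal_ker {Z : Matrix I I ℂ} (hZ : Z.IsHermitian) :
    LinearMap.range (toEuclideanLin Z) = (LinearMap.ker (toEuclideanLin Z))ᗮ := by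
  rw [← (isSymmetric_toEuclideanLin_iff.mpr hZ).orthogonal_range, Submodule.orthogonal_orthogonal]

lemma range_mulVec_subset_iff {X Y : Matrix I I ℂ} (hX : X.IsHermitian) (hY : Y.IsHermitian) :
    Set.range X.mulVec ⊆ Set.range Y.mulVec ↔ ∀ v, Y *ᵥ v = 0 → X *ᵥ v = 0 := by
  have mem_range (Z : Matrix I I ℂ) (v : I → ℂ) :
      v ∈ Set.range Z.mulVec ↔ WithLp.toLp 2 v ∈ LinearMap.range (toEuclideanLin Z) := by
    simpa [toLpLin_apply] using ⟨fun ⟨y, h⟩ => ⟨WithLp.toLp 2 y, h⟩, fun ⟨y, h⟩ => ⟨y.ofLp, h⟩⟩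
  have mem_ker (Z : Matrix I I ℂ) (v : I → ℂ) :
      Z *ᵥ v = 0 ↔ WithLp.toLp 2 v ∈ LinearMap.ker (toEuclideanLin Z) := by
    simp [toLpLin_apply]
  calc Set.range X.mulVec ⊆ Set.range Y.mulVec
        ↔ LinearMap.range (toEuclideanLin X) ≤ LinearMap.range (toEuclideanLin Y) := by
          simp only [Set.subset_def, SetLike.le_def, mem_range, (WithLp.toLp_surjective 2).forall]
    _ ↔ LinearMap.ker (toEuclideanLin Y) ≤ LinearMap.ker (toEuclideanLin X) := by
          rw [range_toEuclideanLin_eq_orthogonal_ker hX, range_toEuclideanLin_eq_orthogonal_ker hY,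
            Submodule.orthogonal_le_orthogonal_iff]
    _ ↔ ∀ v, Y *ᵥ v = 0 → X *ᵥ v = 0 := by
          simp only [SetLike.le_def, mem_ker, (WithLp.toLp_surjective 2).forall]

end Kernel

variable {I : Type*} [Fintype I] [DecidableEq I]

lemma re_trace_diagonal_mul_mul_diagonal_mul_star (W : Matrix I I ℂ) (a b : I → ℝ) :
    (diagonal (RCLike.ofReal ∘ a) * W * diagonal (RCLike.ofReal ∘ b) * star W).trace.re =
      ∑ j, ∑ k, a j * b k * Complex.normSq (W j k) := by
  simp only [trace, diag_apply, mul_apply (N := star W), mul_diagonal, diagonal_mul, star_apply,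
    Complex.re_sum]
  refine Finset.sum_congr rfl fun j _ => Finset.sum_congr rfl fun k _ => ?_
  simp only [Function.comp_apply, RCLike.star_def, Complex.coe_algebraMap, Complex.mul_re,
    Complex.mul_im, Complex.ofReal_re, Complex.ofReal_im, Complex.conj_re, Complex.conj_im,
    Complex.normSq_apply]
  ring

/-- `G` may be any Hermitian generalized inverse of `D`, e.g. `D⁻¹` or the Moore–Penrose inverse. -/
lemma re_trace_mul_mul_le_re_trace {X D G : Matrix I I ℂ} (hX : X.PosSemidef)
    (hDX : (D - X).PosSemidef) (hG : G.IsHermitian) (hGDG : G * D * G = G) :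
    (X * G * X).trace.re ≤ X.trace.re := by
  have key : X - X * G * X =
      (1 - X * G) * X * (1 - X * G)ᴴ + X * G * (D - X) * (X * G)ᴴ := by
    rw [conjTranspose_sub, conjTranspose_one, conjTranspose_mul, hX.1.eq, hG.eq]
    calc X - X * G * X
        = (1 - X * G) * X * (1 - G * X) + X * (G * D * G) * X - X * G * X * G * X := by
          rw [hGDG]; noncomm_ring
      _ = _ := by noncomm_ring
  have hnonneg : 0 ≤ (X - X * G * X).trace := by
    rw [key]
    exact ((hX.mul_mul_conjTranspose_same _).add (hDX.mul_mul_conjTranspose_same _)).trace_nonneg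
  rw [trace_sub] at hnonneg
  linarith [(Complex.nonneg_iff.mp hnonneg).1, Complex.sub_re X.trace (X * G * X).trace]

namespace IsHermitian

variable {A B : Matrix I I ℂ}

lemma cfc_id (hA : A.IsHermitian) : hA.cfc id = A :=
  hA.spectral_theorem.symm

lemma cfc_zero (hA : A.IsHermitian) : hA.cfc 0 = 0 := by
  simp [IsHermitian.cfc]

lemma cfc_one (hA : A.IsHermitian) : hA.cfc 1 = 1 := by
  simp [IsHermitian.cfc]

lemma cfc_mul_cfc (hA : A.IsHermitian) (f g : ℝ → ℝ) :
    hA.cfc f * hA.cfc g = hA.cfc (f * g) := by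
  simp only [IsHermitian.cfc, ← map_mul, diagonal_mul_diagonal]
  congr 2
  ext j
  simp

lemma mul_cfc (hA : A.IsHermitian) (f : ℝ → ℝ) : A * hA.cfc f = hA.cfc (id * f) := by
  rw [← cfc_mul_cfc, hA.cfc_id]

lemma isHermitian_cfc (hA : A.IsHermitian) (f : ℝ → ℝ) : (hA.cfc f).IsHermitian :=
  hA.cfc_eq f ▸ cfc_predicate f A

lemma matLog_eq_cfc (hA : A.IsHermitian) : matLog A = hA.cfc Real.log := by
  rw [matLog, dif_pos hA, IsHermitian.cfc, Unitary.conjStarAlgAut_apply]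
  rfl

/-- `|⟨u j, v k⟩|²` for the eigenvector bases `u` of `A` and `v` of `B`. -/
noncomputable def eigenOverlap (hA : A.IsHermitian) (hB : B.IsHermitian) (j k : I) : ℝ :=
  Complex.normSq ((star (hA.eigenvectorUnitary : Matrix I I ℂ) * hB.eigenvectorUnitary) j k)

lemma eigenOverlap_nonneg (hA : A.IsHermitian) (hB : B.IsHermitian) (j k : I) :
    0 ≤ hA.eigenOverlap hB j k :=
  Complex.normSq_nonneg _

lemma re_trace_cfc_mul_cfc (hA : A.IsHermitian) (hB : B.IsHermitian) (f g : ℝ → ℝ) :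
    (hA.cfc f * hB.cfc g).trace.re =
      ∑ j, ∑ k, f (hA.eigenvalues j) * g (hB.eigenvalues k) * hA.eigenOverlap hB j k := by
  have hW : star (star (hA.eigenvectorUnitary : Matrix I I ℂ) * hB.eigenvectorUnitary) =
      star (hB.eigenvectorUnitary : Matrix I I ℂ) * hA.eigenvectorUnitary := by
    simp [star_mul]
  refine Eq.trans ?_ (re_trace_diagonal_mul_mul_diagonal_mul_star _ (f ∘ hA.eigenvalues)
    (g ∘ hB.eigenvalues))
  rw [hW, IsHermitian.cfc, IsHermitian.cfc, Unitary.conjStarAlgAut_apply,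
    Unitary.conjStarAlgAut_apply]
  simp only [Matrix.mul_assoc]
  rw [trace_mul_comm]
  simp only [Matrix.mul_assoc]

lemma re_trace_eq_sum_left (hA : A.IsHermitian) (hB : B.IsHermitian) :
    A.trace.re = ∑ j, ∑ k, hA.eigenvalues j * hA.eigenOverlap hB j k := by
  simpa [hA.cfc_id, hB.cfc_one] using re_trace_cfc_mul_cfc hA hB id 1

lemma re_trace_eq_sum_right (hA : A.IsHermitian) (hB : B.IsHermitian) :
    B.trace.re = ∑ j, ∑ k, hB.eigenvalues k * hA.eigenOverlap hB j k := by
  simpa [hA.cfc_one, hB.cfc_id] using re_trace_cfc_mul_cfc hA hB 1 id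

lemma re_trace_mul_cfc (hA : A.IsHermitian) (hB : B.IsHermitian) (f : ℝ → ℝ) :
    (A * hB.cfc f).trace.re =
      ∑ j, ∑ k, hA.eigenvalues j * f (hB.eigenvalues k) * hA.eigenOverlap hB j k := by
  simpa [hA.cfc_id] using re_trace_cfc_mul_cfc hA hB id f

lemma re_trace_mul_matLog (hA : A.IsHermitian) (hB : B.IsHermitian) :
    (A * matLog B).trace.re =
      ∑ j, ∑ k, hA.eigenvalues j * Real.log (hB.eigenvalues k) * hA.eigenOverlap hB j k := by
  rw [hB.matLog_eq_cfc, re_trace_mul_cfc hA hB]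

lemma re_trace_mul_matLog_self (hA : A.IsHermitian) (hB : B.IsHermitian) :
    (A * matLog A).trace.re =
      ∑ j, ∑ k, hA.eigenvalues j * Real.log (hA.eigenvalues j) * hA.eigenOverlap hB j k := by
  have h := re_trace_cfc_mul_cfc hA hB (id * Real.log) 1
  rw [hB.cfc_one, Matrix.mul_one, ← hA.mul_cfc, ← hA.matLog_eq_cfc] at h
  simpa using h

lemma re_trace_mul_cfc_mul (hA : A.IsHermitian) (hB : B.IsHermitian) (f : ℝ → ℝ) :
    (A * hB.cfc f * A).trace.re =
      ∑ j, ∑ k, hA.eigenvalues j ^ 2 * f (hB.eigenvalues k) * hA.eigenOverlap hB j k := by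
  have hAA : A * A = hA.cfc (id * id) := by rw [← cfc_mul_cfc, hA.cfc_id]
  rw [trace_mul_comm, ← Matrix.mul_assoc, hAA, re_trace_cfc_mul_cfc]
  simp [sq]

end IsHermitian

end Matrix

lemma Real.sub_mul_le_mul_log_sub_log {x y w : ℝ} (hx : 0 ≤ x) (hy : 0 ≤ y) (hw : 0 ≤ w)
    (hsupp : y = 0 → x * w = 0) :
    x * w - y * w ≤ x * Real.log x * w - x * Real.log y * w := by
  rcases hy.eq_or_lt with rfl | hy
  · simp [hsupp rfl, mul_right_comm x _ w]
  rcases hx.eq_or_lt with rfl | hx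
  · simpa using mul_nonneg hy.le hw
  have h := Real.one_sub_inv_le_log_of_pos (div_pos hx hy)
  rw [Real.log_div hx.ne' hy.ne', inv_div] at h
  have : x - y ≤ x * (Real.log x - Real.log y) := by
    calc x - y = x * (1 - y / x) := by field_simp
      _ ≤ _ := by gcongr
  nlinarith

lemma Real.mul_sub_mul_sq_inv_le_mul_log_sub {x y w c : ℝ} (hx : 0 ≤ x) (hy : 0 ≤ y) (hw : 0 ≤ w)
    (hc : 0 < c) (hsupp : y = 0 → x * w = 0) :
    x * w - c * (x ^ 2 * y⁻¹ * w) ≤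
      x * Real.log y * w - Real.log c * (x * w) - x * Real.log x * w := by
  rcases hy.eq_or_lt with rfl | hy
  · simp [hsupp rfl, mul_right_comm x _ w]
  rcases hx.eq_or_lt with rfl | hx
  · simp
  have h := Real.one_sub_inv_le_log_of_pos (div_pos hy (mul_pos hc hx))
  rw [Real.log_div hy.ne' (mul_pos hc hx).ne', Real.log_mul hc.ne' hx.ne', inv_div] at h
  have : x - c * x ^ 2 * y⁻¹ ≤ x * (Real.log y - (Real.log c + Real.log x)) := by
    calc x - c * x ^ 2 * y⁻¹ = x * (1 - c * x / y) := by field_simp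
      _ ≤ _ := by gcongr
  nlinarith

namespace Matrix.PosSemidef

variable {I : Type*} [Fintype I] [DecidableEq I] {ρ σ τ : Matrix I I ℂ}

lemma eigenvalues_mul_eigenOverlap_eq_zero (hρ : ρ.PosSemidef) (hτ : τ.IsHermitian)
    (hker : ∀ v, τ *ᵥ v = 0 → ρ *ᵥ v = 0) {j k : I} (hk : hτ.eigenvalues k = 0) :
    hρ.1.eigenvalues j * hρ.1.eigenOverlap hτ j k = 0 := by
  -- `hτ.cfc kerIndicator` is the projection onto `ker τ`, which `ρ` annihilates
  set kerIndicator : ℝ → ℝ := fun x => if x = 0 then 1 else 0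
  have hτP : τ * hτ.cfc kerIndicator = 0 := by
    rw [hτ.mul_cfc, ← hτ.cfc_zero]
    congr 1
    ext x
    by_cases hx : x = 0 <;> simp [kerIndicator, hx]
  have hterm : ∀ j k,
      0 ≤ hρ.1.eigenvalues j * kerIndicator (hτ.eigenvalues k) * hρ.1.eigenOverlap hτ j k :=
    fun j k => mul_nonneg (mul_nonneg (hρ.eigenvalues_nonneg j) (by positivity))
      (hρ.1.eigenOverlap_nonneg hτ j k)
  have hsum := hρ.1.re_trace_mul_cfc hτ kerIndicator
  rw [mul_eq_zero_of_ker_le hker hτP, trace_zero, Complex.zero_re, eq_comm] at hsum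
  have hrow := (Finset.sum_eq_zero_iff_of_nonneg fun j _ => Finset.sum_nonneg fun k _ =>
    hterm j k).mp hsum j (Finset.mem_univ _)
  simpa [kerIndicator, hk] using
    (Finset.sum_eq_zero_iff_of_nonneg fun k _ => hterm j k).mp hrow k (Finset.mem_univ _)

/-- Klein's inequality. -/
theorem re_trace_sub_le_re_trace_mul_matLog_sub (hρ : ρ.PosSemidef) (hτ : τ.PosSemidef)
    (hker : ∀ v, τ *ᵥ v = 0 → ρ *ᵥ v = 0) :
    ρ.trace.re - τ.trace.re ≤ (ρ * (matLog ρ - matLog τ)).trace.re := by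
  rw [mul_sub, trace_sub, Complex.sub_re, hρ.1.re_trace_eq_sum_left hτ.1,
    hρ.1.re_trace_eq_sum_right hτ.1, hρ.1.re_trace_mul_matLog_self hτ.1,
    hρ.1.re_trace_mul_matLog hτ.1]
  simp only [← Finset.sum_sub_distrib]
  exact Finset.sum_le_sum fun j _ => Finset.sum_le_sum fun k _ =>
    Real.sub_mul_le_mul_log_sub_log (hρ.eigenvalues_nonneg j) (hτ.eigenvalues_nonneg k)
      (hρ.1.eigenOverlap_nonneg hτ.1 j k) (hρ.eigenvalues_mul_eigenOverlap_eq_zero hτ.1 hker)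

theorem log_mul_re_trace_add_re_trace_mul_matLog_le (hρ : ρ.PosSemidef) {c : ℝ} (hc : 0 < c)
    (hle : (σ - c • ρ).PosSemidef) :
    Real.log c * ρ.trace.re + (ρ * matLog ρ).trace.re ≤ (ρ * matLog σ).trace.re := by
  have hσ : σ.PosSemidef := by simpa using hle.add (hρ.smul hc.le)
  -- with `0⁻¹ = 0`, `G` is the Moore–Penrose inverse of `σ`
  set G := hσ.1.cfc (·⁻¹)
  have hGσG : G * σ * G = G := by
    calc G * σ * G = G * hσ.1.cfc id * G := by rw [hσ.1.cfc_id]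
      _ = G := by
        simp only [G, IsHermitian.cfc_mul_cfc]
        congr 1
        ext x
        simpa using mul_inv_mul_cancel x⁻¹
  have hquad := re_trace_mul_mul_le_re_trace (hρ.smul hc.le) hle (hσ.1.isHermitian_cfc _) hGσG
  simp only [smul_mul_assoc, mul_smul_comm, smul_smul, trace_smul, Complex.real_smul,
    Complex.re_ofReal_mul] at hquad
  have hquad' : c * (ρ * G * ρ).trace.re ≤ ρ.trace.re :=
    le_of_mul_le_mul_left (by linarith) hc
  rw [hρ.1.re_trace_mul_cfc_mul hσ.1, hρ.1.re_trace_eq_sum_left hσ.1] at hquad'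
  have hpointwise := Finset.sum_le_sum fun j (_ : j ∈ Finset.univ) => Finset.sum_le_sum
    fun k (_ : k ∈ Finset.univ) => Real.mul_sub_mul_sq_inv_le_mul_log_sub (hρ.eigenvalues_nonneg j)
      (hσ.eigenvalues_nonneg k) (hρ.1.eigenOverlap_nonneg hσ.1 j k) hc
      (hρ.eigenvalues_mul_eigenOverlap_eq_zero hσ.1 (fun v => hρ.mulVec_eq_zero_of_sub_smul hc hle))
  rw [hρ.1.re_trace_eq_sum_left hσ.1, hρ.1.re_trace_mul_matLog_self hσ.1,
    hρ.1.re_trace_mul_matLog hσ.1]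
  simp only [Finset.sum_sub_distrib] at hpointwise
  simp only [Finset.mul_sum] at hquad' ⊢
  linarith

end Matrix.PosSemidef

lemma Matrix.IsDensity.re_trace {I : Type*} [Fintype I] {ρ : Matrix I I ℂ} (hρ : ρ.IsDensity) :
    ρ.trace.re = 1 := by
  simp [hρ.2]

section RelativeEntropy

variable {I : Type*} [Fintype I] [DecidableEq I] {ρ σ τ : Matrix I I ℂ}

theorem mul_re_trace_mul_matLog_sub_le (hρ : ρ.IsDensity) (hσ : σ.IsDensity)
    (hτ : τ.IsDensity) {c : ℝ} (hc0 : 0 < c) (hc1 : c < 1) (hle : (σ - c • ρ).PosSemidef)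
    (hker : ∀ v, τ *ᵥ v = 0 → σ *ᵥ v = 0) :
    c * (ρ * (matLog ρ - matLog τ)).trace.re ≤
      (σ * (matLog σ - matLog τ)).trace.re +
        (-(c * Real.log c) - (1 - c) * Real.log (1 - c)) := by
  have h1c : 0 < 1 - c := by linarith
  set ρ' := (1 - c)⁻¹ • (σ - c • ρ)
  have hρ' : ρ'.PosSemidef := hle.smul (inv_nonneg.mpr h1c.le)
  have hσ_eq : σ = c • ρ + (1 - c) • ρ' := by simp [ρ', smul_smul, h1c.ne']
  have hle' : (σ - (1 - c) • ρ').PosSemidef := by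
    rw [hσ_eq, add_sub_cancel_right]
    exact hρ.1.smul hc0.le
  have hmix (L : Matrix I I ℂ) :
      (σ * L).trace.re = c * (ρ * L).trace.re + (1 - c) * (ρ' * L).trace.re := by
    conv_lhs => rw [hσ_eq]
    simp [add_mul, trace_add, trace_smul]
  have htr' : ρ'.trace.re = 1 := by
    have := hmix 1
    simp only [Matrix.mul_one, hρ.re_trace, hσ.re_trace] at this
    nlinarith
  have mono := hρ.1.log_mul_re_trace_add_re_trace_mul_matLog_le hc0 hle
  have mono' := hρ'.log_mul_re_trace_add_re_trace_mul_matLog_le h1c hle'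
  have klein := hρ'.re_trace_sub_le_re_trace_mul_matLog_sub hτ.1
    fun v hv => hρ'.mulVec_eq_zero_of_sub_smul h1c hle' (hker v hv)
  rw [hρ.re_trace] at mono
  rw [htr'] at mono' klein
  rw [hτ.re_trace, sub_self] at klein
  simp only [mul_sub, trace_sub, Complex.sub_re, hmix] at klein ⊢
  nlinarith [mul_nonneg h1c.le klein]

theorem ofReal_mul_qRelEnt_le (hρ : ρ.IsDensity) (hσ : σ.IsDensity) (hτ : τ.IsDensity) {c : ℝ}
    (hc0 : 0 < c) (hc1 : c ≤ 1) (hle : (σ - c • ρ).PosSemidef) :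
    ENNReal.ofReal c * qRelEnt ρ τ ≤
      qRelEnt σ τ + ENNReal.ofReal (-(c * Real.log c) - (1 - c) * Real.log (1 - c)) := by
  rcases hc1.lt_or_eq with hc1 | rfl
  swap
  · have hσρ : σ - (1 : ℝ) • ρ = 0 :=
      hle.trace_eq_zero_iff.mp (by rw [trace_sub, trace_smul, hσ.2, hρ.2]; simp)
    rw [one_smul, sub_eq_zero] at hσρ
    simp [hσρ]
  by_cases hsub : Set.range σ.mulVec ⊆ Set.range τ.mulVec
  · have hker := (Matrix.range_mulVec_subset_iff hσ.1.1 hτ.1.1).mp hsub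
    have hsubρ : Set.range ρ.mulVec ⊆ Set.range τ.mulVec :=
      (Matrix.range_mulVec_subset_iff hρ.1.1 hτ.1.1).mpr
        fun v hv => hρ.1.mulVec_eq_zero_of_sub_smul hc0 hle (hker v hv)
    rw [qRelEnt, qRelEnt, if_pos hsub, if_pos hsubρ, ← ENNReal.ofReal_mul hc0.le]
    exact (ENNReal.ofReal_le_ofReal
      (mul_re_trace_mul_matLog_sub_le hρ hσ hτ hc0 hc1 hle hker)).trans ENNReal.ofReal_add_le
  · simp [qRelEnt, hsub]

end RelativeEntropy

section Separable

variable {n : ℕ} {d : Fin n → ℕ}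

lemma piKron_mul (P Q : ∀ s, Matrix (Fin (d s)) (Fin (d s)) ℂ) :
    piKron (fun s => P s * Q s) = piKron P * piKron Q := by
  ext i j
  simp only [piKron, of_apply, mul_apply, ← Finset.prod_mul_distrib]
  rw [Finset.prod_univ_sum, Fintype.piFinset_univ]

lemma piKron_conjTranspose (P : ∀ s, Matrix (Fin (d s)) (Fin (d s)) ℂ) :
    piKron (fun s => (P s)ᴴ) = (piKron P)ᴴ := by
  ext i j
  simp [piKron, conjTranspose_apply, star_prod]

lemma piKron_posSemidef {P : ∀ s, Matrix (Fin (d s)) (Fin (d s)) ℂ}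
    (hP : ∀ s, (P s).PosSemidef) : (piKron P).PosSemidef := by
  open scoped MatrixOrder in
  choose B hB using fun s => CStarAlgebra.nonneg_iff_eq_star_mul_self.mp (hP s).nonneg
  have : P = fun s => (B s)ᴴ * B s := funext hB
  rw [this, piKron_mul, piKron_conjTranspose]
  exact posSemidef_conjTranspose_mul_self _

lemma trace_piKron (P : ∀ s, Matrix (Fin (d s)) (Fin (d s)) ℂ) :
    (piKron P).trace = ∏ s, (P s).trace := by
  simp only [trace, diag, piKron, of_apply]
  rw [Finset.prod_univ_sum, Fintype.piFinset_univ]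

lemma convex_setOf_isDensity {I : Type*} [Fintype I] :
    Convex ℝ {M : Matrix I I ℂ | M.IsDensity} := by
  intro x hx y hy a b ha hb hab
  refine ⟨(hx.1.smul ha).add (hy.1.smul hb), ?_⟩
  simp [trace_add, trace_smul, hx.2, hy.2, ← Complex.ofReal_add, hab]

lemma IsSepState.isDensity {τ : Matrix (∀ s, Fin (d s)) (∀ s, Fin (d s)) ℂ} (h : IsSepState τ) :
    τ.IsDensity := by
  refine convexHull_min ?_ convex_setOf_isDensity h
  rintro _ ⟨P, hP, rfl⟩
  exact ⟨piKron_posSemidef fun s => (hP s).1, by simp [trace_piKron, (hP _).2]⟩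

end Separable

/-- if `σ − cρ ≥ 0` with `c ∈ (0,1]` then `E_R(σ) ≥ c E_R(ρ) − h₂(c)`. -/
theorem statement12 {n : ℕ} {d : Fin n → ℕ}
    (ρ σ : Matrix (∀ s, Fin (d s)) (∀ s, Fin (d s)) ℂ) (hρ : ρ.IsDensity) (hσ : σ.IsDensity)
    (c : ℝ) (hc0 : 0 < c) (hc1 : c ≤ 1) (hle : (σ - c • ρ).PosSemidef) :
    ENNReal.ofReal c * relEntEnt ρ ≤
      relEntEnt σ + ENNReal.ofReal (-(c * Real.log c) - (1 - c) * Real.log (1 - c)) := by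
  unfold relEntEnt
  rw [ENNReal.iInf_add]
  refine le_iInf fun τ => ?_
  rw [ENNReal.iInf_add]
  refine le_iInf fun hτ => ?_
  exact (mul_le_mul_right (iInf₂_le τ hτ) _).trans
    (ofReal_mul_qRelEnt_le hρ hσ hτ.isDensity hc0 hc1 hle)
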